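/- arXiv:2201.06403 — 2 statements merged into one kernel-verified Lean document; each statement's English description precedes it below -/
import Mathlib

section
/- Let T ⊆ ℕ₀^d be a GNS with corner c and let x be a minimal generator of T (i.e., x ∈ T \ {0} and x is not a sum of two nonzero elements of T). Then T \ {x} has corner c if and only if x ≤ c − 1 coordinatewise. -/
open scoped BigOperators

/-- A generalized numerical semigroup (GNS): a submonoid of ℕ₀^d with finite complement. -/
def IsGNS {d : ℕ} (S : Set (Fin d → ℕ)) : Prop :=
  0 ∈ S ∧ (∀ x ∈ S, ∀ y ∈ S, x + y ∈ S) ∧ Sᶜ.Finite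

/-- `c` is a corner of `S`: (1) any tuple whose i-th coordinate is ≥ c i lies in S;
(2) for each i with c i ≥ 1 there is a tuple with i-th coordinate c i − 1 outside S. -/
def IsCornerOf {d : ℕ} (S : Set (Fin d → ℕ)) (c : Fin d → ℕ) : Prop :=
  c ∈ S ∧
  (∀ i : Fin d, ∀ x : Fin d → ℕ, c i ≤ x i → x ∈ S) ∧
  (∀ i : Fin d, c i = 0 ∨ ∃ x : Fin d → ℕ, x i + 1 = c i ∧ x ∉ S)

namespace IsCornerOf

variable {d : ℕ} {S : Set (Fin d → ℕ)} {c x : Fin d → ℕ}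

theorem add_one_le_of_notMem (hc : IsCornerOf S c) (hx : x ∉ S) (i : Fin d) :
    x i + 1 ≤ c i := by
  by_contra! hlt
  exact hx (hc.2.1 i x (by omega))

theorem diff_singleton (hc : IsCornerOf S c) (hxc : x ≠ c) (hlt : ∀ i, x i + 1 ≤ c i) :
    IsCornerOf (S \ {x}) c := by
  refine ⟨⟨hc.1, hxc.symm⟩, fun i y hy => ⟨hc.2.1 i y hy, ?_⟩, fun i => ?_⟩
  · rintro rfl
    have := hlt i
    omega
  · exact (hc.2.2 i).imp_right fun ⟨y, hy, hyS⟩ => ⟨y, hy, fun h => hyS h.1⟩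

end IsCornerOf

theorem remove_minimal_generator_corner_iff_general {d : ℕ} (T : Set (Fin d → ℕ))
    (c x : Fin d → ℕ) (hc : IsCornerOf T c) (hx0 : x ≠ 0) :
    IsCornerOf (T \ {x}) c ↔ ∀ i, x i + 1 ≤ c i := by
  refine ⟨fun h => h.add_one_le_of_notMem fun hx => hx.2 rfl, fun hlt => ?_⟩
  obtain ⟨i, -⟩ := Function.ne_iff.mp hx0
  have hxc : x ≠ c := fun h => by simpa [h] using hlt i
  exact hc.diff_singleton hxc hlt

theorem remove_minimal_generator_corner_iff {d : ℕ} (T : Set (Fin d → ℕ)) (hT : IsGNS T)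
    (c x : Fin d → ℕ) (hc : IsCornerOf T c) (hx : x ∈ T) (hx0 : x ≠ 0)
    (hmin : ¬ ∃ a ∈ T, ∃ b ∈ T, a ≠ 0 ∧ b ≠ 0 ∧ x = a + b) :
    IsCornerOf (T \ {x}) c ↔ ∀ i, x i + 1 ≤ c i :=
  remove_minimal_generator_corner_iff_general T c x hc hx0
end

section
/- Given g ∈ ℕ and c = (c₁,…,c_d) ∈ ℕ^d with c_i ≥ 2 for some coordinate setup (c not coordinatewise ≤ (1,…,1)), there exists a GNS in ℕ₀^d with corner c and genus g if and only if ⌈c₁/2⌉ + ⋯ + ⌈c_d/2⌉ ≤ g ≤ c₁⋯c_d − 1. -/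
open scoped BigOperators

/-!
Write `H` for the finite set of gaps of `S`; additivity of `S` says that whenever `x + y ∈ H`,
one of `x`, `y` lies in `H`.

Lower bound: the gap with `i`-th coordinate `cᵢ - 1` splits, for every `k`, into summands with
`i`-th coordinates `k` and `cᵢ - 1 - k`, so gaps take at least `⌈cᵢ / 2⌉` nonzero values in
coordinate `i`. A pair (coordinate, value) is witnessed by a gap minimal among those with that
value, and a gap cannot be such a witness for two coordinates, so `g ≥ ∑ ⌈cᵢ / 2⌉`.
Upper bound: the gaps lie in the box `∏ [0, cᵢ)` minus the origin.

Conversely, the gaps `k eᵢ` with `0 < k ≤ (cᵢ - 1) / 2` or `k = cᵢ - 1` attain the minimum, and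
adjoining nonzero points of the box one at a time, each minimal among those left, keeps the
complement additively closed and reaches every genus up to `∏ cᵢ - 1`.
-/

open Finset

def ComplAddClosed {M : Type*} [Add M] (H : Finset M) : Prop :=
  ∀ x y, x + y ∈ H → x ∈ H ∨ y ∈ H

section LowerBound

variable {ι : Type*}

def coordValues (H : Finset (ι → ℕ)) (i : ι) : Finset ℕ :=
  (H.image (· i)).erase 0

theorem mem_coordValues {H : Finset (ι → ℕ)} {i : ι} {a : ℕ} :
    a ∈ coordValues H i ↔ a ≠ 0 ∧ ∃ x ∈ H, x i = a := by
  simp [coordValues]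

theorem half_add_one_le_card_of_pairs {V : Finset ℕ} {m : ℕ} (hm : m ∈ V)
    (hV : ∀ k, 0 < k → k < m → k ∈ V ∨ m - k ∈ V) : m / 2 + 1 ≤ #V := by
  have hcover : Set.SurjOn (fun k => min k (m - k)) ↑V ↑(range (m / 2 + 1)) := by
    intro p hp
    simp only [coe_range, Set.mem_Iio] at hp
    rcases Nat.eq_zero_or_pos p with rfl | hp0
    · exact ⟨m, hm, by simp⟩
    · rcases hV p hp0 (by omega) with h | h
      · exact ⟨p, h, by simp only; omega⟩
      · exact ⟨m - p, h, by simp only; omega⟩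
  simpa using card_le_card_of_surjOn _ hcover

variable [DecidableEq ι] {H : Finset (ι → ℕ)}

theorem update_zero_add_single (x : ι → ℕ) (i : ι) :
    Function.update x i 0 + Pi.single i (x i) = x := by
  ext j
  by_cases h : j = i <;> simp [h]

theorem ComplAddClosed.half_add_one_le_card_coordValues (hH : ComplAddClosed H) {x : ι → ℕ}
    (hx : x ∈ H) {i : ι} (hxi : x i ≠ 0) : x i / 2 + 1 ≤ #(coordValues H i) := by
  refine half_add_one_le_card_of_pairs (mem_coordValues.2 ⟨hxi, x, hx, rfl⟩) fun k hk0 hkx => ?_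
  have hsplit : Function.update x i k + Pi.single i (x i - k) = x := by
    ext j
    by_cases h : j = i
    · subst h
      rw [Pi.add_apply, Function.update_self, Pi.single_eq_same]
      omega
    · simp [h]
  rcases hH _ _ (hsplit ▸ hx) with h | h
  · exact .inl (mem_coordValues.2 ⟨hk0.ne', _, h, by simp⟩)
  · exact .inr (mem_coordValues.2 ⟨by omega, _, h, by simp⟩)

/-- One of the summands of `x = update x i 0 + single i (x i)` lies in `H`, and each is
smaller than `x` while keeping one of the coordinates `x j`, `x i`. -/
theorem ComplAddClosed.eq_of_minimal (hH : ComplAddClosed H) {x : ι → ℕ} {i j : ι}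
    (hi : Minimal (fun y => y ∈ H ∧ y i = x i) x) (hj : Minimal (fun y => y ∈ H ∧ y j = x j) x)
    (hxi : x i ≠ 0) (hxj : x j ≠ 0) : i = j := by
  by_contra hij
  have hx := hi.prop.1
  rw [← update_zero_add_single x i] at hx
  rcases hH _ _ hx with h | h
  · refine hj.not_lt ⟨h, by simp [Ne.symm hij]⟩ ?_
    exact update_lt_self_iff.2 (Nat.pos_of_ne_zero hxi)
  · refine hi.not_lt ⟨h, by simp⟩ ?_
    conv_rhs => rw [← update_zero_add_single x i]
    refine lt_add_of_pos_left _ (pos_iff_ne_zero.2 fun h0 => hxj ?_)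
    simpa [Ne.symm hij] using congrFun h0 j

variable [Fintype ι]

theorem ComplAddClosed.sum_card_coordValues_le (hH : ComplAddClosed H) :
    ∑ i, #(coordValues H i) ≤ #H := by
  have hwit : ∀ p ∈ univ.sigma (coordValues H),
      ∃ x, Minimal (fun y => y ∈ H ∧ y p.1 = p.2) x := by
    rintro ⟨i, a⟩ hp
    obtain ⟨-, hne⟩ := mem_coordValues.1 (mem_sigma.1 hp).2
    obtain ⟨x, hx⟩ := exists_minimal (s := H.filter (· i = a)) (filter_nonempty_iff.2 hne)
    exact ⟨x, by simpa using hx⟩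
  choose! w hw using hwit
  rw [← card_sigma]
  refine card_le_card_of_injOn w (fun p hp => (hw p hp).prop.1) ?_
  rintro ⟨i, a⟩ hp ⟨j, b⟩ hq hpq
  have ha := (hw _ hp).prop.2
  have hb := (hw _ hq).prop.2
  simp only at hpq ha hb
  have hij : i = j := by
    refine hH.eq_of_minimal (x := w ⟨i, a⟩) ?_ ?_ ?_ ?_
    · simpa [ha] using hw _ hp
    · simpa [hpq, hb] using hw _ hq
    · rw [ha]; exact (mem_coordValues.1 (mem_sigma.1 hp).2).1
    · rw [hpq, hb]; exact (mem_coordValues.1 (mem_sigma.1 hq).2).1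
  subst hij
  rw [← ha, ← hb, hpq]

end LowerBound

section Construction

def lowGaps (m : ℕ) : Finset ℕ :=
  insert m (Icc 1 (m / 2))

theorem complAddClosed_lowGaps (m : ℕ) : ComplAddClosed (lowGaps m) := by
  intro a b h
  simp only [lowGaps, mem_insert, mem_Icc] at h ⊢
  omega

theorem zero_notMem_lowGaps {m : ℕ} (hm : m ≠ 0) : 0 ∉ lowGaps m := by
  simp only [lowGaps, mem_insert, mem_Icc]
  omega

theorem card_lowGaps (m : ℕ) : #(lowGaps m) = m / 2 + 1 := by
  rw [lowGaps, card_insert_of_notMem (by simp only [mem_Icc]; omega), Nat.card_Icc]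
  omega

variable {ι : Type*}

section Axes

variable [DecidableEq ι]

theorem eq_single_of_add_eq_single {x y : ι → ℕ} {i : ι} {k : ℕ} (h : x + y = Pi.single i k) :
    x = Pi.single i (x i) := by
  ext j
  by_cases hj : j = i
  · simp [hj]
  · have hxy := congrFun h j
    simp only [Pi.add_apply, Pi.single_eq_of_ne hj, Nat.add_eq_zero_iff] at hxy
    simp [hj, hxy.1]

variable [Fintype ι]

def axisSet (V : ι → Finset ℕ) : Finset (ι → ℕ) :=
  univ.biUnion fun i => (V i).image (Pi.single i)

theorem mem_axisSet {V : ι → Finset ℕ} {x : ι → ℕ} :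
    x ∈ axisSet V ↔ ∃ i, ∃ k ∈ V i, Pi.single i k = x := by
  simp [axisSet]

theorem card_axisSet {V : ι → Finset ℕ} (hV : ∀ i, 0 ∉ V i) : #(axisSet V) = ∑ i, #(V i) := by
  rw [axisSet, card_biUnion]
  · exact sum_congr rfl fun i _ => card_image_of_injective _ (Pi.single_injective i)
  · intro i _ j _ hij
    simp only [Function.onFun, disjoint_left, mem_image]
    rintro _ ⟨a, ha, rfl⟩ ⟨b, -, hba⟩
    have hai : a = 0 := by simpa [Ne.symm hij] using (congrFun hba i).symm
    exact hV i (hai ▸ ha)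

theorem complAddClosed_axisSet {V : ι → Finset ℕ} (hV : ∀ i, ComplAddClosed (V i)) :
    ComplAddClosed (axisSet V) := by
  intro x y hxy
  obtain ⟨i, k, hk, hik⟩ := mem_axisSet.1 hxy
  have hx := eq_single_of_add_eq_single hik.symm
  have hy := eq_single_of_add_eq_single ((add_comm y x).trans hik.symm)
  have hsum : x i + y i = k := by simpa using congrFun hik.symm i
  rcases hV i _ _ (hsum ▸ hk) with h | h
  · exact .inl (mem_axisSet.2 ⟨i, _, h, hx.symm⟩)
  · exact .inr (mem_axisSet.2 ⟨i, _, h, hy.symm⟩)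

end Axes

variable [Fintype ι]

theorem ComplAddClosed.insert_of_minimal {G B : Finset (ι → ℕ)} (hG : ComplAddClosed G)
    (hB : ∀ x y, x + y ∈ B → x ≠ 0 → x ∈ B) {y : ι → ℕ} (hy : Minimal (· ∈ B \ G) y) :
    ComplAddClosed (insert y G) := by
  intro x z hxz
  rcases mem_insert.1 hxz with rfl | h
  · by_cases hx0 : x = 0
    · subst hx0
      exact .inr (by simp)
    by_cases hz0 : z = 0
    · subst hz0
      exact .inl (by simp)
    have hxB := hB x z (mem_sdiff.1 hy.prop).1 hx0
    have hxG : x ∈ G := by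
      by_contra hxG
      exact hy.not_lt (mem_sdiff.2 ⟨hxB, hxG⟩) (lt_add_of_pos_right x (pos_iff_ne_zero.2 hz0))
    exact .inl (mem_insert_of_mem hxG)
  · exact (hG x z h).imp mem_insert_of_mem mem_insert_of_mem

theorem ComplAddClosed.exists_card_eq {G B : Finset (ι → ℕ)} (hG : ComplAddClosed G)
    (hGB : G ⊆ B) (hB : ∀ x y, x + y ∈ B → x ≠ 0 → x ∈ B) {n : ℕ} (hGn : #G ≤ n)
    (hnB : n ≤ #B) : ∃ G', ComplAddClosed G' ∧ G ⊆ G' ∧ G' ⊆ B ∧ #G' = n := by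
  induction n with
  | zero => exact ⟨G, hG, subset_rfl, hGB, by omega⟩
  | succ n ih =>
    rcases hGn.eq_or_lt with hGn | hGn
    · exact ⟨G, hG, subset_rfl, hGB, hGn⟩
    obtain ⟨G', hG', hGG', hG'B, rfl⟩ := ih (by omega) (by omega)
    obtain ⟨y, hy⟩ := exists_minimal (s := B \ G') (sdiff_nonempty.2 fun h => by
      have := card_le_card h
      omega)
    obtain ⟨hyB, hyG'⟩ := mem_sdiff.1 hy.prop
    exact ⟨insert y G', hG'.insert_of_minimal hB hy, hGG'.trans (subset_insert _ _),
      insert_subset hyB hG'B, card_insert_of_notMem hyG'⟩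

end Construction

section Corner

variable {d : ℕ}

def boxBelow (c : Fin d → ℕ) : Finset (Fin d → ℕ) :=
  Fintype.piFinset fun i => range (c i)

theorem mem_boxBelow {c x : Fin d → ℕ} : x ∈ boxBelow c ↔ ∀ i, x i < c i := by
  simp [boxBelow]

theorem card_boxBelow_erase_zero {c : Fin d → ℕ} (hc : ∀ i, c i ≠ 0) :
    #((boxBelow c).erase 0) = (∏ i, c i) - 1 := by
  have h0 : (0 : Fin d → ℕ) ∈ boxBelow c := mem_boxBelow.2 fun i => Nat.pos_of_ne_zero (hc i)
  rw [card_erase_of_mem h0]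
  simp [boxBelow]

theorem mem_boxBelow_erase_zero_of_add {c x y : Fin d → ℕ} (h : x + y ∈ (boxBelow c).erase 0)
    (hx : x ≠ 0) : x ∈ (boxBelow c).erase 0 := by
  rw [mem_erase, mem_boxBelow] at h ⊢
  exact ⟨hx, fun i => lt_of_le_of_lt (Nat.le_add_right _ _) (h.2 i)⟩

theorem single_mem_boxBelow_erase_zero {c : Fin d → ℕ} (hc : ∀ j, c j ≠ 0) {i : Fin d} {k : ℕ}
    (hk0 : k ≠ 0) (hk : k < c i) : Pi.single i k ∈ (boxBelow c).erase 0 := by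
  refine mem_erase.2 ⟨by simpa using hk0, mem_boxBelow.2 fun j => ?_⟩
  by_cases hj : j = i
  · subst hj
    simpa using hk
  · simpa [Pi.single_eq_of_ne hj] using Nat.pos_of_ne_zero (hc j)

theorem IsGNS.exists_eq_compl {S : Set (Fin d → ℕ)} (hS : IsGNS S) :
    ∃ H : Finset (Fin d → ℕ), S = (↑H)ᶜ :=
  let ⟨H, hH⟩ := hS.2.2.exists_finset_coe
  ⟨H, by rw [hH, compl_compl]⟩

theorem isGNS_compl_iff {H : Finset (Fin d → ℕ)} :
    IsGNS (↑H : Set (Fin d → ℕ))ᶜ ↔ 0 ∉ H ∧ ComplAddClosed H := by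
  simp only [IsGNS, compl_compl, H.finite_toSet, and_true, Set.mem_compl_iff, mem_coe,
    ComplAddClosed]
  refine and_congr_right' ⟨fun h x y hxy => ?_, fun h x hx y hy hxy => ?_⟩
  · by_contra! hxy'
    exact h x hxy'.1 y hxy'.2 hxy
  · exact (h x y hxy).elim hx hy

theorem isCornerOf_compl {c : Fin d → ℕ} {H : Finset (Fin d → ℕ)} (hH : H ⊆ (boxBelow c).erase 0)
    (hcorner : ∀ i, ∃ x ∈ H, x i + 1 = c i) : IsCornerOf (↑H)ᶜ c := by
  refine ⟨fun hc => ?_, fun i x hx hxH => ?_, fun i => .inr ?_⟩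
  · obtain ⟨hc0, hcbox⟩ := mem_erase.1 (hH hc)
    exact hc0 (funext fun i => absurd (mem_boxBelow.1 hcbox i) (lt_irrefl _))
  · exact absurd (mem_boxBelow.1 (mem_of_mem_erase (hH hxH)) i) (not_lt.2 hx)
  · obtain ⟨x, hx, hxi⟩ := hcorner i
    exact ⟨x, hxi, by simpa using hx⟩

theorem IsGNS.sum_le_ncard_compl {S : Set (Fin d → ℕ)} {c : Fin d → ℕ} (hS : IsGNS S)
    (hcS : IsCornerOf S c) (hc : ∀ i, c i ≠ 1) : ∑ i, (c i + 1) / 2 ≤ Sᶜ.ncard := by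
  obtain ⟨H, rfl⟩ := hS.exists_eq_compl
  have hH := (isGNS_compl_iff.1 hS).2
  rw [compl_compl, Set.ncard_coe_finset]
  refine (sum_le_sum fun i _ => ?_).trans hH.sum_card_coordValues_le
  rcases hcS.2.2 i with hci | ⟨x, hxi, hx⟩
  · simp [hci]
  · have := hH.half_add_one_le_card_coordValues (by simpa using hx) (i := i)
      (by have := hc i; omega)
    omega

theorem IsGNS.ncard_compl_le {S : Set (Fin d → ℕ)} {c : Fin d → ℕ} (hS : IsGNS S)
    (hcS : IsCornerOf S c) (hc : ∀ i, c i ≠ 0) : Sᶜ.ncard ≤ (∏ i, c i) - 1 := by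
  obtain ⟨H, rfl⟩ := hS.exists_eq_compl
  have h0 := (isGNS_compl_iff.1 hS).1
  rw [compl_compl, Set.ncard_coe_finset, ← card_boxBelow_erase_zero hc]
  refine card_le_card fun x hx =>
    mem_erase.2 ⟨ne_of_mem_of_not_mem hx h0, mem_boxBelow.2 fun i => ?_⟩
  by_contra! hxi
  exact hcS.2.1 i x hxi (by simpa using hx)

theorem exists_isGNS_isCornerOf_ncard {c : Fin d → ℕ} (hc : ∀ i, 2 ≤ c i) {g : ℕ}
    (hlow : ∑ i, (c i + 1) / 2 ≤ g) (hhigh : g ≤ (∏ i, c i) - 1) :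
    ∃ S : Set (Fin d → ℕ), IsGNS S ∧ IsCornerOf S c ∧ Sᶜ.ncard = g := by
  have hc0 : ∀ i, c i ≠ 0 := fun i => by have := hc i; omega
  set G₀ := axisSet fun i => lowGaps (c i - 1)
  have hG₀ : ComplAddClosed G₀ := complAddClosed_axisSet fun i => complAddClosed_lowGaps _
  have hcard : #G₀ = ∑ i, (c i + 1) / 2 := by
    rw [card_axisSet fun i => zero_notMem_lowGaps (by have := hc i; omega)]
    refine sum_congr rfl fun i _ => ?_
    rw [card_lowGaps]
    have := hc i
    omega
  have hG₀B : G₀ ⊆ (boxBelow c).erase 0 := by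
    intro x hx
    obtain ⟨i, k, hk, rfl⟩ := mem_axisSet.1 hx
    have hci := hc i
    simp only [lowGaps, mem_insert, mem_Icc] at hk
    exact single_mem_boxBelow_erase_zero hc0 (by omega) (by omega)
  obtain ⟨G, hG, hG₀G, hGB, rfl⟩ := hG₀.exists_card_eq hG₀B
    (fun x y => mem_boxBelow_erase_zero_of_add) (hcard.trans_le hlow)
    (hhigh.trans_eq (card_boxBelow_erase_zero hc0).symm)
  refine ⟨(↑G)ᶜ, isGNS_compl_iff.2 ⟨fun h => (mem_erase.1 (hGB h)).1 rfl, hG⟩,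
    isCornerOf_compl hGB fun i => ⟨Pi.single i (c i - 1), hG₀G ?_, ?_⟩, by simp⟩
  · exact mem_axisSet.2 ⟨i, _, mem_insert_self _ _, rfl⟩
  · have := hc i
    rw [Pi.single_eq_same]
    omega

end Corner

theorem exists_GNS_corner_genus_iff_general {d : ℕ} (c : Fin d → ℕ) (g : ℕ)
    (hc : ∀ i, 2 ≤ c i) :
    (∃ S : Set (Fin d → ℕ), IsGNS S ∧ IsCornerOf S c ∧ Set.ncard Sᶜ = g) ↔
      (∑ i : Fin d, (c i + 1) / 2 ≤ g ∧ g ≤ (∏ i : Fin d, c i) - 1) := by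
  refine ⟨?_, fun ⟨hlow, hhigh⟩ => exists_isGNS_isCornerOf_ncard hc hlow hhigh⟩
  rintro ⟨S, hS, hcS, rfl⟩
  exact ⟨hS.sum_le_ncard_compl hcS fun i => by have := hc i; omega,
    hS.ncard_compl_le hcS fun i => by have := hc i; omega⟩

theorem exists_GNS_corner_genus_iff {d : ℕ} (c : Fin d → ℕ) (g : ℕ)
    (hc : ∀ i, 2 ≤ c i) (hg : 0 < g) :
    (∃ S : Set (Fin d → ℕ), IsGNS S ∧ IsCornerOf S c ∧ Set.ncard Sᶜ = g) ↔
      (∑ i : Fin d, (c i + 1) / 2 ≤ g ∧ g ≤ (∏ i : Fin d, c i) - 1) :=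
  exists_GNS_corner_genus_iff_general c g hc
end
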